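/- Let A be a real n×n matrix and P a symmetric positive definite n×n matrix such that A^T P + P A ≺ 0. Then for every δ > 0, exp(A^T δ) P exp(A δ) ≺ P. -/

import Mathlib

/-!
Along a trajectory `y t = exp (t • A) *ᵥ x` of `ẏ = A y`, the quadratic form `V y = yᵀ P y` has
derivative `yᵀ (Aᵀ P + P A) y`, which is negative because `exp (t • A)` is invertible, so
`y t ≠ 0` whenever `x ≠ 0`. Hence `V (y δ) = xᵀ exp (δ Aᵀ) P exp (δ A) x < V (y 0) = xᵀ P x`.
-/

open Matrix NormedSpace

theorem Matrix.dotProduct_transpose_mul_mul_mulVec {ι κ R : Type*} [Fintype ι] [Fintype κ]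
    [CommSemiring R] (B : Matrix ι κ R) (P : Matrix ι ι R) (x : κ → R) :
    x ⬝ᵥ (Bᵀ * P * B) *ᵥ x = (B *ᵥ x) ⬝ᵥ P *ᵥ (B *ᵥ x) := by
  rw [← mulVec_mulVec, ← mulVec_mulVec, dotProduct_mulVec, vecMul_transpose, dotProduct_comm]

section Derivatives

variable {𝕜 ι : Type*} [NontriviallyNormedField 𝕜] [Fintype ι] {t : 𝕜}

theorem HasDerivAt.dotProduct {u v : 𝕜 → ι → 𝕜} {u' v' : ι → 𝕜}
    (hu : HasDerivAt u u' t) (hv : HasDerivAt v v' t) :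
    HasDerivAt (fun s => u s ⬝ᵥ v s) (u' ⬝ᵥ v t + u t ⬝ᵥ v') t :=
  (HasDerivAt.fun_sum (u := Finset.univ) fun i _ =>
    (hasDerivAt_pi.mp hu i).fun_mul (hasDerivAt_pi.mp hv i)).congr_deriv
    (by rw [Finset.sum_add_distrib]; rfl)

theorem HasDerivAt.const_mulVec {m : Type*} {v : 𝕜 → ι → 𝕜} {v' : ι → 𝕜} (M : Matrix m ι 𝕜)
    (hv : HasDerivAt v v' t) :
    HasDerivAt (fun s => M *ᵥ v s) (M *ᵥ v') t :=
  hasDerivAt_pi.mpr fun i =>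
    ((hasDerivAt_const t (M i)).dotProduct hv).congr_deriv (by simp [mulVec])

theorem HasDerivAt.dotProduct_mulVec_of_linear {y : 𝕜 → ι → 𝕜} {A : Matrix ι ι 𝕜}
    (hy : HasDerivAt y (A *ᵥ y t) t) (P : Matrix ι ι 𝕜) :
    HasDerivAt (fun s => y s ⬝ᵥ P *ᵥ y s) (y t ⬝ᵥ (Aᵀ * P + P * A) *ᵥ y t) t :=
  (hy.dotProduct (hy.const_mulVec P)).congr_deriv <| by
    rw [add_mulVec, dotProduct_add, ← mulVec_mulVec, ← mulVec_mulVec, dotProduct_mulVec (y t) Aᵀ,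
      vecMul_transpose, dotProduct_comm (A *ᵥ y t)]

end Derivatives

section Flow

variable {ι : Type*} [Fintype ι] [DecidableEq ι]

section

attribute [local instance] Matrix.linftyOpNormedAddCommGroup Matrix.linftyOpNormedRing
  Matrix.linftyOpNormedAlgebra

theorem hasDerivAt_exp_smul_mulVec (A : Matrix ι ι ℝ) (x : ι → ℝ) (t : ℝ) :
    HasDerivAt (fun s => exp (s • A) *ᵥ x) (A *ᵥ (exp (t • A) *ᵥ x)) t := by
  have := ((mulVecBilin ℝ ℝ).flip x).toContinuousLinearMap.hasFDerivAt.comp_hasDerivAt t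
    (hasDerivAt_exp_smul_const' A t)
  exact this.congr_deriv (mulVec_mulVec _ _ _).symm

end

theorem exp_smul_mulVec_ne_zero (A : Matrix ι ι ℝ) (t : ℝ) {x : ι → ℝ} (hx : x ≠ 0) :
    exp (t • A) *ᵥ x ≠ 0 := by
  simpa using (mulVec_injective_iff_isUnit.mpr (isUnit_exp (t • A))).ne hx

theorem strictAnti_dotProduct_mulVec_exp_smul_mulVec {A P : Matrix ι ι ℝ}
    (hlyap : (-(Aᵀ * P + P * A)).PosDef) {x : ι → ℝ} (hx : x ≠ 0) :
    StrictAnti fun s : ℝ => (exp (s • A) *ᵥ x) ⬝ᵥ P *ᵥ (exp (s • A) *ᵥ x) := by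
  refine strictAnti_of_deriv_neg fun t => ?_
  rw [((hasDerivAt_exp_smul_mulVec A x t).dotProduct_mulVec_of_linear P).deriv]
  have := hlyap.dotProduct_mulVec_pos (exp_smul_mulVec_ne_zero A t hx)
  rwa [star_trivial, neg_mulVec, dotProduct_neg, neg_pos] at this

end Flow

theorem lyapunov_implies_flow_contraction_general
    (n : ℕ) (A P : Matrix (Fin n) (Fin n) ℝ)
    (hPsymm : P.IsSymm)
    (hlyap : (-(Aᵀ * P + P * A)).PosDef) :
    ∀ δ : ℝ, 0 < δ →
      (P - exp (δ • Aᵀ) * P * exp (δ • A)).PosDef := by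
  intro δ hδ
  rw [← transpose_smul, exp_transpose]
  refine .of_dotProduct_mulVec_pos ?_ fun x hx => ?_
  · have hP : P.IsHermitian := isHermitian_iff_isSymm.mpr hPsymm
    simpa using hP.sub (isHermitian_conjTranspose_mul_mul (exp (δ • A)) hP)
  · rw [star_trivial, sub_mulVec, dotProduct_sub, sub_pos, dotProduct_transpose_mul_mul_mulVec]
    simpa using strictAnti_dotProduct_mulVec_exp_smul_mulVec hlyap hx hδ

/-- a strict quadratic Lyapunov inequality `Aᵀ P + P A ≺ 0` implies
strict contraction of the quadratic form under the flow map: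
`exp(Aᵀδ) P exp(Aδ) ≺ P` for every `δ > 0`. -/
theorem lyapunov_implies_flow_contraction
    (n : ℕ) (A P : Matrix (Fin n) (Fin n) ℝ)
    (hPsymm : P.IsSymm) (hPpos : P.PosDef)
    (hlyap : (-(Aᵀ * P + P * A)).PosDef) :
    ∀ δ : ℝ, 0 < δ →
      (P - exp (δ • Aᵀ) * P * exp (δ • A)).PosDef :=
  lyapunov_implies_flow_contraction_general n A P hPsymm hlyap
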